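/- arXiv:cs/0703046 — 5 statements merged into one kernel-verified Lean document; each statement's English description precedes it below -/
import Mathlib

section
/- For any σ > 0, g > 0, P ≥ 0, and P_D, P_F ∈ [0,1], the quantity (α_F − β_F)·σ²·g/(σ² + β_F·g·P)² + (α_D − β_D)·σ²·g/(σ² + β_D·g·P)² is nonnegative. (This is the paper's Lemma stating that the first-order partial derivative of the orthogonal-channel J-divergence objective with respect to each sensor's power is nonnegative at every valid power allocation point.) -/
/-- `α_F = P_F(1−P_D) + P_D(P_D−P_F)` -/
noncomputable def alphaF (PD PF : ℝ) : ℝ := PF * (1 - PD) + PD * (PD - PF)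

/-- `α_D = P_D(1−P_F) − P_F(P_D−P_F)` -/
noncomputable def alphaD (PD PF : ℝ) : ℝ := PD * (1 - PF) - PF * (PD - PF)

/-- `β_F = P_D(1−P_D)` -/
noncomputable def betaF (PD : ℝ) : ℝ := PD * (1 - PD)

/-- `β_D = P_F(1−P_F)` -/
noncomputable def betaD (PF : ℝ) : ℝ := PF * (1 - PF)

/-- The first-order partial derivative of the orthogonal-channel J-divergence
objective with respect to a sensor's power is nonnegative at every valid
power allocation point. -/
theorem first_derivative_nonneg (σ g P PD PF : ℝ)
    (hσ : 0 < σ) (hg : 0 < g) (hP : 0 ≤ P)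
    (hPD : PD ∈ Set.Icc (0 : ℝ) 1) (hPF : PF ∈ Set.Icc (0 : ℝ) 1) :
    0 ≤ (alphaF PD PF - betaF PD) * σ ^ 2 * g / (σ ^ 2 + betaF PD * g * P) ^ 2
      + (alphaD PD PF - betaD PF) * σ ^ 2 * g / (σ ^ 2 + betaD PF * g * P) ^ 2 := by
  obtain ⟨hD0, hD1⟩ := hPD
  obtain ⟨hF0, hF1⟩ := hPF
  set A : ℝ := σ ^ 2 + betaF PD * g * P with hAdef
  set B : ℝ := σ ^ 2 + betaD PF * g * P with hBdef
  have hbF : 0 ≤ betaF PD := mul_nonneg hD0 (by linarith)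
  have hbD : 0 ≤ betaD PF := mul_nonneg hF0 (by linarith)
  have hA : 0 < A := by
    have : 0 ≤ betaF PD * g * P := mul_nonneg (mul_nonneg hbF hg.le) hP
    positivity
  have hB : 0 < B := by
    have : 0 ≤ betaD PF * g * P := mul_nonneg (mul_nonneg hbD hg.le) hP
    positivity
  have hA2 : (A ^ 2 : ℝ) ≠ 0 := by positivity
  have hB2 : (B ^ 2 : ℝ) ≠ 0 := by positivity
  rw [div_add_div _ _ hA2 hB2]
  apply div_nonneg _ (by positivity)
  -- numerator: σ²g * E where E = (αF−βF)B² + (αD−βD)A²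
  have key : (alphaF PD PF - betaF PD) * B ^ 2 + (alphaD PD PF - betaD PF) * A ^ 2
      = (PD - PF) ^ 2 * (1 - PD - PF) ^ 2 * g * P * (A + B)
        + (PD - PF) ^ 2 * (A ^ 2 + B ^ 2) := by
    simp only [hAdef, hBdef, alphaF, alphaD, betaF, betaD]
    ring
  have h1 : 0 ≤ (PD - PF) ^ 2 * (1 - PD - PF) ^ 2 * g * P * (A + B) := by
    have : (0:ℝ) ≤ A + B := by positivity
    positivity
  have h2 : 0 ≤ (PD - PF) ^ 2 * (A ^ 2 + B ^ 2) := by positivity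
  nlinarith [sq_nonneg σ, hg.le, mul_nonneg (mul_nonneg (sq_nonneg σ) hg.le)
    (key ▸ add_nonneg h1 h2 : 0 ≤ (alphaF PD PF - betaF PD) * B ^ 2 + (alphaD PD PF - betaD PF) * A ^ 2)]
end

section
/- For any σ > 0, g > 0, P ≥ 0, and P_D, P_F ∈ [0,1] with P_D > P_F, the quantity (α_F − β_F)·σ²·g/(σ² + β_F·g·P)² + (α_D − β_D)·σ²·g/(σ² + β_D·g·P)² is strictly positive. (This is the paper's Corollary that when P_D > P_F the first-order derivative of the J-divergence objective with respect to the allocated power is strictly positive at every valid power allocation point, so there is no interior stationary point.) -/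
lemma aux_pos (u v A B : ℝ) (hA : 0 < A) (hB : 0 < B) (huv : 0 < u + v)
    (hu : u < 0 → B ≤ A) (hv : v < 0 → A ≤ B) :
    0 < u * B ^ 2 + v * A ^ 2 := by
  rcases lt_or_ge u 0 with h | h
  · have hBA := hu h
    have h1 : 0 ≤ A ^ 2 - B ^ 2 := by nlinarith
    have h2 : 0 ≤ (-u) * (A ^ 2 - B ^ 2) := mul_nonneg (by linarith) h1
    have h3 : 0 < (u + v) * A ^ 2 := mul_pos huv (pow_pos hA 2)
    nlinarith
  · rcases lt_or_ge v 0 with h2 | h2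
    · have hAB := hv h2
      have h1 : 0 ≤ B ^ 2 - A ^ 2 := by nlinarith
      have h3 : 0 ≤ (-v) * (B ^ 2 - A ^ 2) := mul_nonneg (by linarith) h1
      have h4 : 0 < (u + v) * B ^ 2 := mul_pos huv (pow_pos hB 2)
      nlinarith
    · rcases lt_or_ge 0 u with h3 | h3
      · have := mul_pos h3 (pow_pos hB 2)
        have := mul_nonneg h2 (pow_pos hA 2).le
        linarith
      · have hu0 : u = 0 := le_antisymm h3 h
        have hv0 : 0 < v := by linarith
        have := mul_pos hv0 (pow_pos hA 2)
        nlinarith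

/-- When `P_D > P_F`, the first-order derivative of the J-divergence objective
with respect to the allocated power is strictly positive at every valid power
allocation point. -/
theorem first_derivative_pos (σ g P PD PF : ℝ)
    (hσ : 0 < σ) (hg : 0 < g) (hP : 0 ≤ P)
    (hPD : PD ∈ Set.Icc (0 : ℝ) 1) (hPF : PF ∈ Set.Icc (0 : ℝ) 1)
    (hDF : PF < PD) :
    0 < (alphaF PD PF - betaF PD) * σ ^ 2 * g / (σ ^ 2 + betaF PD * g * P) ^ 2
      + (alphaD PD PF - betaD PF) * σ ^ 2 * g / (σ ^ 2 + betaD PF * g * P) ^ 2 := by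
  obtain ⟨hPD0, hPD1⟩ := hPD
  obtain ⟨hPF0, hPF1⟩ := hPF
  have hσ2 : 0 < σ ^ 2 := by positivity
  have hbF : 0 ≤ betaF PD := mul_nonneg hPD0 (by linarith)
  have hbD : 0 ≤ betaD PF := mul_nonneg hPF0 (by linarith)
  set A := σ ^ 2 + betaF PD * g * P with hAdef
  set B := σ ^ 2 + betaD PF * g * P with hBdef
  have hApos : 0 < A := by
    have : 0 ≤ betaF PD * g * P := mul_nonneg (mul_nonneg hbF hg.le) hP
    linarith
  have hBpos : 0 < B := by
    have : 0 ≤ betaD PF * g * P := mul_nonneg (mul_nonneg hbD hg.le) hP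
    linarith
  have key : 0 < (2 * PD - 1) * B ^ 2 + (1 - 2 * PF) * A ^ 2 := by
    apply aux_pos _ _ _ _ hApos hBpos (by linarith)
    · intro h
      -- PD < 1/2, so PF < PD < 1/2, hence betaD ≤ betaF, so B ≤ A
      have hbb : betaD PF ≤ betaF PD := by
        unfold betaD betaF
        nlinarith
      have : betaD PF * g * P ≤ betaF PD * g * P :=
        mul_le_mul_of_nonneg_right (mul_le_mul_of_nonneg_right hbb hg.le) hP
      simp only [hAdef, hBdef]
      linarith
    · intro h
      -- PF > 1/2, so PD > PF > 1/2, hence betaF ≤ betaD, so A ≤ B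
      have hbb : betaF PD ≤ betaD PF := by
        unfold betaD betaF
        nlinarith
      have : betaF PD * g * P ≤ betaD PF * g * P :=
        mul_le_mul_of_nonneg_right (mul_le_mul_of_nonneg_right hbb hg.le) hP
      simp only [hAdef, hBdef]
      linarith
  have hnum : (alphaF PD PF - betaF PD) * σ ^ 2 * g * B ^ 2
      + (alphaD PD PF - betaD PF) * σ ^ 2 * g * A ^ 2
      = σ ^ 2 * g * (PD - PF) * ((2 * PD - 1) * B ^ 2 + (1 - 2 * PF) * A ^ 2) := by
    unfold alphaF alphaD betaF betaD
    ring
  have hA2 : (0:ℝ) < A ^ 2 := pow_pos hApos 2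
  have hB2 : (0:ℝ) < B ^ 2 := pow_pos hBpos 2
  rw [div_add_div _ _ (ne_of_gt hA2) (ne_of_gt hB2)]
  apply div_pos
  · have hpos := mul_pos (mul_pos (mul_pos hσ2 hg) (by linarith : (0:ℝ) < PD - PF)) key
    nlinarith [hnum, hpos]
  · exact mul_pos hA2 hB2
end

section
/- Let σ > 0, g > 0, and 0 ≤ P_F < P_D ≤ 1. Then (α_F − β_F)·β_F/(σ² + β_F·g·P)³ + (α_D − β_D)·β_D/(σ² + β_D·g·P)³ ≥ 0 holds for every P ≥ 0 if and only if 3/4 − P_F/2 − (1/4)·√(1 + 12 P_F − 12 P_F²) ≤ P_D ≤ 3/4 − P_F/2 + (1/4)·√(1 + 12 P_F − 12 P_F²). (This is the paper's Lemma characterizing the region S of detection/false-alarm probability pairs on which the second-order partial derivative of the J-divergence objective with respect to the allocated power, which equals a negative multiple of the displayed quantity, is nonpositive for all P ≥ 0.) -/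
/-!
Since `α_F - β_F = (P_D - P_F)(2P_D - 1)` and `α_D - β_D = (P_D - P_F)(1 - 2P_F)`, the quantity is
`x / (σ² + β_F g P)³ + y / (σ² + β_D g P)³` with weights `x, y` independent of `P`, and
`x + y = 2 (P_D - P_F)² (Δ / 16 - (P_D - 3/4 + P_F/2)²)` with `Δ = 1 + 12 P_F - 12 P_F²`.
At `P = 0` the quantity is `(x + y) / σ⁶`, so nonnegativity forces the stated interval.
Conversely, if `x < 0` then `P_D < 1/2`, hence `β_D ≤ β_F` and the negative weight carries the smaller
factor `1 / (σ² + β_F g P)³` for every `P ≥ 0`; the case `y < 0` is symmetric. So `x + y ≥ 0`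
persists for all `P`.
-/

lemma add_mul_nonneg_of_add_nonneg {x y p q : ℝ} (hxy : 0 ≤ x + y) (hp : 0 ≤ p) (hq : 0 ≤ q)
    (hx : x < 0 → p ≤ q) (hy : y < 0 → q ≤ p) : 0 ≤ x * p + y * q := by
  rcases lt_or_ge x 0 with hx0 | hx0
  · nlinarith [hx hx0]
  rcases lt_or_ge y 0 with hy0 | hy0
  · nlinarith [hy hy0]
  positivity

lemma sub_mul_sqrt_le_and_le_add_mul_sqrt_iff {m r D x : ℝ} (hr : 0 ≤ r) (hD : 0 ≤ D) :
    (m - r * √D ≤ x ∧ x ≤ m + r * √D) ↔ (x - m) ^ 2 ≤ r ^ 2 * D := by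
  have hrD : r * √D = √(r ^ 2 * D) := by rw [Real.sqrt_mul (sq_nonneg r), Real.sqrt_sq hr]
  have habs : |x - m| ≤ √(r ^ 2 * D) ↔ (x - m) ^ 2 ≤ r ^ 2 * D := by
    rw [Real.le_sqrt (abs_nonneg _) (by positivity), sq_abs]
  rw [hrD, ← habs, abs_sub_le_iff]
  constructor <;> rintro ⟨h₁, h₂⟩ <;> constructor <;> linarith

section Sensor

variable {PD PF : ℝ}

lemma betaF_nonneg (h₀ : 0 ≤ PD) (h₁ : PD ≤ 1) : 0 ≤ betaF PD :=
  mul_nonneg h₀ (sub_nonneg.mpr h₁)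

lemma betaD_nonneg (h₀ : 0 ≤ PF) (h₁ : PF ≤ 1) : 0 ≤ betaD PF :=
  mul_nonneg h₀ (sub_nonneg.mpr h₁)

lemma alphaF_sub_betaF : alphaF PD PF - betaF PD = (PD - PF) * (2 * PD - 1) := by
  unfold alphaF betaF; ring

lemma alphaD_sub_betaD : alphaD PD PF - betaD PF = (PD - PF) * (1 - 2 * PF) := by
  unfold alphaD betaD; ring

lemma betaF_sub_betaD : betaF PD - betaD PF = (PD - PF) * (1 - PD - PF) := by
  unfold betaF betaD; ring

lemma betaD_le_betaF_of_weight_neg (hFD : PF ≤ PD) (hbF : 0 ≤ betaF PD)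
    (h : (alphaF PD PF - betaF PD) * betaF PD < 0) : betaD PF ≤ betaF PD := by
  rw [alphaF_sub_betaF] at h
  have hPD : 2 * PD < 1 := by
    by_contra! hPD
    exact h.not_ge (mul_nonneg (mul_nonneg (by linarith) (by linarith)) hbF)
  have := mul_nonneg (sub_nonneg.mpr hFD) (by linarith : (0 : ℝ) ≤ 1 - PD - PF)
  linarith [betaF_sub_betaD (PD := PD) (PF := PF)]

lemma betaF_le_betaD_of_weight_neg (hFD : PF ≤ PD) (hbD : 0 ≤ betaD PF)
    (h : (alphaD PD PF - betaD PF) * betaD PF < 0) : betaF PD ≤ betaD PF := by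
  rw [alphaD_sub_betaD] at h
  have hPF : 1 < 2 * PF := by
    by_contra! hPF
    exact h.not_ge (mul_nonneg (mul_nonneg (by linarith) (by linarith)) hbD)
  have := mul_nonneg (sub_nonneg.mpr hFD) (by linarith : (0 : ℝ) ≤ PD + PF - 1)
  linarith [betaF_sub_betaD (PD := PD) (PF := PF)]

lemma weights_add_eq :
    (alphaF PD PF - betaF PD) * betaF PD + (alphaD PD PF - betaD PF) * betaD PF
      = 2 * (PD - PF) ^ 2
        * ((1 / 4) ^ 2 * (1 + 12 * PF - 12 * PF ^ 2) - (PD - (3 / 4 - PF / 2)) ^ 2) := by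
  unfold alphaF alphaD betaF betaD; ring

lemma weights_add_nonneg_iff (hFD : PF ≠ PD) :
    0 ≤ (alphaF PD PF - betaF PD) * betaF PD + (alphaD PD PF - betaD PF) * betaD PF
      ↔ (PD - (3 / 4 - PF / 2)) ^ 2 ≤ (1 / 4) ^ 2 * (1 + 12 * PF - 12 * PF ^ 2) := by
  have hpos : 0 < 2 * (PD - PF) ^ 2 := by
    have := sub_ne_zero.mpr hFD.symm
    positivity
  rw [weights_add_eq, mul_nonneg_iff_of_pos_left hpos, sub_nonneg]

end Sensor

/-- Characterization of the region `S` on which the second-order partial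
derivative of the J-divergence objective (a negative multiple of the displayed
quantity) is nonpositive for all allocated powers `P ≥ 0`. -/
theorem second_derivative_region (σ g PD PF : ℝ)
    (hσ : 0 < σ) (hg : 0 < g)
    (hPF0 : 0 ≤ PF) (hFD : PF < PD) (hPD1 : PD ≤ 1) :
    (∀ P : ℝ, 0 ≤ P →
      0 ≤ (alphaF PD PF - betaF PD) * betaF PD / (σ ^ 2 + betaF PD * g * P) ^ 3
        + (alphaD PD PF - betaD PF) * betaD PF / (σ ^ 2 + betaD PF * g * P) ^ 3)
    ↔ (3 / 4 - PF / 2 - (1 / 4) * Real.sqrt (1 + 12 * PF - 12 * PF ^ 2) ≤ PD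
        ∧ PD ≤ 3 / 4 - PF / 2 + (1 / 4) * Real.sqrt (1 + 12 * PF - 12 * PF ^ 2)) := by
  have hbF := betaF_nonneg (hPF0.trans hFD.le) hPD1
  have hbD := betaD_nonneg hPF0 (hFD.le.trans hPD1)
  have hΔ : 0 ≤ 1 + 12 * PF - 12 * PF ^ 2 := by nlinarith
  rw [sub_mul_sqrt_le_and_le_add_mul_sqrt_iff (by norm_num) hΔ, ← weights_add_nonneg_iff hFD.ne]
  constructor
  · intro h
    have h₀ := h 0 le_rfl
    simp only [mul_zero, add_zero, ← add_div] at h₀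
    rwa [le_div_iff₀ (by positivity), zero_mul] at h₀
  · intro hsum P hP
    simp only [div_eq_mul_inv]
    refine add_mul_nonneg_of_add_nonneg hsum (by positivity) (by positivity) (fun hx => ?_)
      (fun hy => ?_)
    · gcongr
      exact betaD_le_betaF_of_weight_neg hFD.le hbF hx
    · gcongr
      exact betaF_le_betaD_of_weight_neg hFD.le hbD hy
end

section
/- Let μ and ν be probability measures on a measurable space X and let κ be a Markov kernel from X to a measurable space Y. Then the Kullback–Leibler divergence is non-increasing under the action of the kernel: KL(κ∘μ ‖ κ∘ν) ≤ KL(μ ‖ ν). (This is the paper's Lemma 1, the data-processing lemma for the KL distance along a Markov chain.) -/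
open MeasureTheory ProbabilityTheory
open scoped Classical

/-- The Kullback–Leibler divergence `KL(μ ‖ ν)`: equal to `∫ log (dμ/dν) dμ` when
`μ` is absolutely continuous w.r.t. `ν` (and the log-likelihood ratio is
integrable), and `+∞` otherwise. -/

noncomputable def klDiv {α : Type*} [MeasurableSpace α] (μ ν : Measure α) : EReal :=
  if μ ≪ ν ∧ Integrable (llr μ ν) μ then ((∫ x, llr μ ν x ∂μ : ℝ) : EReal) else ⊤

/-- Mathlib's `InformationTheory.klDiv` adds the correction `ν univ - μ univ`, which vanishes
here; Gibbs' inequality makes the truncation at `0` in `ENNReal.ofReal` harmless. -/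
lemma klDiv_eq_coe_klDiv_of_measure_univ_eq {α : Type*} [MeasurableSpace α]
    {μ ν : Measure α} [IsFiniteMeasure μ] [IsFiniteMeasure ν] (h_univ : μ Set.univ = ν Set.univ) :
    klDiv μ ν = (InformationTheory.klDiv μ ν : EReal) := by
  by_cases h : μ ≪ ν ∧ Integrable (llr μ ν) μ
  · have h_real : ν.real Set.univ = μ.real Set.univ := by simp [measureReal_def, h_univ]
    have h_nonneg := InformationTheory.integral_llr_add_sub_measure_univ_nonneg h.1 h.2
    rw [h_real, add_sub_cancel_right] at h_nonneg
    rw [klDiv, if_pos h, InformationTheory.klDiv_of_ac_of_integrable h.1 h.2, h_real,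
      add_sub_cancel_right, EReal.coe_ennreal_ofReal, max_eq_left h_nonneg]
  · rw [klDiv, if_neg h, InformationTheory.klDiv_eq_top_iff.mpr fun hac hint => h ⟨hac, hint⟩]
    rfl

/-- Data-processing inequality: the KL divergence is non-increasing under the
action of a Markov kernel, `KL(κ∘μ ‖ κ∘ν) ≤ KL(μ ‖ ν)`. -/
theorem klDiv_comp_le {X Y : Type*} [MeasurableSpace X] [MeasurableSpace Y]
    (μ ν : Measure X) [IsProbabilityMeasure μ] [IsProbabilityMeasure ν]
    (κ : Kernel X Y) [IsMarkovKernel κ] :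
    klDiv (μ.bind κ) (ν.bind κ) ≤ klDiv μ ν := by
  rw [klDiv_eq_coe_klDiv_of_measure_univ_eq (by simp),
    klDiv_eq_coe_klDiv_of_measure_univ_eq (by simp), EReal.coe_ennreal_le_coe_ennreal_iff]
  exact InformationTheory.klDiv_comp_right_le μ ν κ
end

section
/- Let σ > 0, g > 0, and P_D, P_F ∈ [0,1]. Then the function f(P) = (σ² + α_F g P)/(σ² + β_F g P) + (σ² + α_D g P)/(σ² + β_D g P) is monotone nondecreasing on [0, ∞); consequently, for power vectors (P₁,…,P_K) and (P'₁,…,P'_K) with 0 ≤ P_j ≤ P'_j for all j, the decoupled J-divergence objective J(P₁,…,P_K) = Σ_j f_j(P_j) satisfies J(P₁,…,P_K) ≤ J(P'₁,…,P'_K). (This is the paper's conclusion that the J-divergence objective is nondecreasing in the power budget, so the optimum lies on the constraint boundary.) -/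
lemma key_ineq (d f s a b : ℝ) (hd0 : 0 ≤ d) (hd1 : d ≤ 1) (hf0 : 0 ≤ f) (hf1 : f ≤ 1)
    (hs : 0 ≤ s) (ha : 0 ≤ a) (hb : 0 ≤ b) :
    0 ≤ (d - f) * ((2*d - 1) * (s + f*(1-f)*a) * (s + f*(1-f)*b)
        + (1 - 2*f) * (s + d*(1-d)*a) * (s + d*(1-d)*b)) := by
  have h1 : (0:ℝ) ≤ 2*(d-f)^2*s^2 := by positivity
  have h2 : (0:ℝ) ≤ (a+b)*s*(d-f)^2*((1-d)*(1-f)+d*f) := by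
    have : (0:ℝ) ≤ (1-d)*(1-f)+d*f := by nlinarith
    have hab : (0:ℝ) ≤ a + b := by linarith
    positivity
  have h3 : (0:ℝ) ≤ a*b*(d-f)^2*((f*(1-f))^2+(d*(1-d))^2 + (d+f-1)^2*(f*(1-f)+d*(1-d))) := by
    have hu : (0:ℝ) ≤ f*(1-f) := by nlinarith
    have hv : (0:ℝ) ≤ d*(1-d) := by nlinarith
    positivity
  nlinarith [h1, h2, h3]

lemma per_sensor_mono (σ g d f : ℝ) (hσ : 0 < σ) (hg : 0 < g)
    (hd : d ∈ Set.Icc (0:ℝ) 1) (hf : f ∈ Set.Icc (0:ℝ) 1) :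
    MonotoneOn
      (fun P : ℝ =>
        (σ ^ 2 + alphaF d f * g * P) / (σ ^ 2 + betaF d * g * P)
          + (σ ^ 2 + alphaD d f * g * P) / (σ ^ 2 + betaD f * g * P))
      (Set.Ici 0) := by
  obtain ⟨hd0, hd1⟩ := hd
  obtain ⟨hf0, hf1⟩ := hf
  have hbF : (0:ℝ) ≤ betaF d := by unfold betaF; nlinarith
  have hbD : (0:ℝ) ≤ betaD f := by unfold betaD; nlinarith
  intro x hx y hy hxy
  simp only [Set.mem_Ici] at hx hy
  have hAx : 0 < σ ^ 2 + betaF d * g * x := by positivity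
  have hAy : 0 < σ ^ 2 + betaF d * g * y := by positivity
  have hBx : 0 < σ ^ 2 + betaD f * g * x := by positivity
  have hBy : 0 < σ ^ 2 + betaD f * g * y := by positivity
  simp only
  rw [div_add_div _ _ hAx.ne' hBx.ne', div_add_div _ _ hAy.ne' hBy.ne',
    div_le_div_iff₀ (by positivity) (by positivity)]
  have hkey := key_ineq d f (σ ^ 2) (g * x) (g * y) hd0 hd1 hf0 hf1 (by positivity)
    (by positivity) (by positivity)
  have hm : (0:ℝ) ≤ σ ^ 2 * g * (y - x) := by
    have : (0:ℝ) ≤ y - x := by linarith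
    positivity
  unfold alphaF alphaD betaF betaD at *
  nlinarith [mul_nonneg hm hkey]

/-- The per-sensor J-divergence objective is monotone nondecreasing on `[0,∞)`;
consequently the decoupled J-divergence objective `J(P₁,…,P_K) = Σ_j f_j(P_j)` is
nondecreasing in the power vector. -/
theorem J_objective_monotone (σ : ℝ) (hσ : 0 < σ) :
    (∀ g PD PF : ℝ, 0 < g → PD ∈ Set.Icc (0 : ℝ) 1 → PF ∈ Set.Icc (0 : ℝ) 1 →
      MonotoneOn
        (fun P : ℝ =>
          (σ ^ 2 + alphaF PD PF * g * P) / (σ ^ 2 + betaF PD * g * P)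
            + (σ ^ 2 + alphaD PD PF * g * P) / (σ ^ 2 + betaD PF * g * P))
        (Set.Ici 0))
    ∧
    (∀ (K : ℕ) (g PD PF : Fin K → ℝ),
      (∀ j, 0 < g j) → (∀ j, PD j ∈ Set.Icc (0 : ℝ) 1) →
      (∀ j, PF j ∈ Set.Icc (0 : ℝ) 1) →
      ∀ P P' : Fin K → ℝ, (∀ j, 0 ≤ P j) → (∀ j, P j ≤ P' j) →
        ∑ j, ((σ ^ 2 + alphaF (PD j) (PF j) * g j * P j)
                / (σ ^ 2 + betaF (PD j) * g j * P j)
              + (σ ^ 2 + alphaD (PD j) (PF j) * g j * P j)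
                / (σ ^ 2 + betaD (PF j) * g j * P j))
          ≤ ∑ j, ((σ ^ 2 + alphaF (PD j) (PF j) * g j * P' j)
                / (σ ^ 2 + betaF (PD j) * g j * P' j)
              + (σ ^ 2 + alphaD (PD j) (PF j) * g j * P' j)
                / (σ ^ 2 + betaD (PF j) * g j * P' j))) := by
  constructor
  · intro g PD PF hg hPD hPF
    exact per_sensor_mono σ g PD PF hσ hg hPD hPF
  · intro K g PD PF hg hPD hPF P P' hP hPP'
    apply Finset.sum_le_sum
    intro j _
    exact per_sensor_mono σ (g j) (PD j) (PF j) hσ (hg j) (hPD j) (hPF j)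
      (Set.mem_Ici.2 (hP j)) (Set.mem_Ici.2 ((hP j).trans (hPP' j))) (hPP' j)
end
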